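/- The derived subalgebra [Iuₙ, Iuₙ] equals the linear span of the set {x_{ij} : 1 ≤ i, j ≤ n, i ≠ j} ∪ {b_i − b_j : 1 ≤ i, j ≤ n}. -/

import Mathlib

/-- Index set for the basis of `Iuₙ`: the off-diagonal pairs indexing the `x_{ij}` (`i ≠ j`),
then the `a_i`'s, then the `b_i`'s. -/
abbrev IuIdx (n : ℕ) : Type := { p : Fin n × Fin n // p.1 ≠ p.2 } ⊕ (Fin n ⊕ Fin n)

/-- `Iuₙ`: the free `K`-vector space on the basis `{x_{ij} : i ≠ j} ∪ {a_i} ∪ {b_i}`. -/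
abbrev Iu (n : ℕ) (K : Type*) [Field K] : Type _ := IuIdx n →₀ K

variable (n : ℕ) (K : Type*) [Field K]

/-- The basis element `x_{ij}` (`i ≠ j`). -/
noncomputable def xE (i j : Fin n) (h : i ≠ j) : Iu n K :=
  Finsupp.single (Sum.inl ⟨(i, j), h⟩) 1

/-- The basis element `a_i`. -/
noncomputable def aE (i : Fin n) : Iu n K := Finsupp.single (Sum.inr (Sum.inl i)) 1

/-- The basis element `b_i`. -/
noncomputable def bE (i : Fin n) : Iu n K := Finsupp.single (Sum.inr (Sum.inr i)) 1

/-- `x_{ij}` as a total function (junk value `0` when `i = j`). -/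
noncomputable def xe (i j : Fin n) : Iu n K := if h : i ≠ j then xE n K i j h else 0

/-- The length `λ(i,j)`: equals `j - i` if `i < j`, and `n - (i - j)` if `i > j`. -/
def lam (n : ℕ) (i j : Fin n) : ℕ := (j - i : Fin n).val

/-- The bracket of `Iuₙ` on basis elements:
`[x_{ij}, x_{kl}] = δ_{jk} x_{il} - δ_{li} x_{kj}` if `λ(i,j) + λ(k,l) < n` and `0` otherwise
(unless both `j = k` and `l = i`); `[x_{ij}, x_{ji}] = ½(b_i - b_j)`;
`[a_i, x_{jk}] = (δ_{ij} - δ_{ik}) x_{jk}`; `[b_i, x_{jk}] = 0`;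
`[a_i, a_j] = [b_i, b_j] = [a_i, b_j] = 0`; extended antisymmetrically. -/
noncomputable def bb : IuIdx n → IuIdx n → Iu n K
  | Sum.inl ⟨(i, j), _⟩, Sum.inl ⟨(k, l), _⟩ =>
      if k = j ∧ l = i then ((2 : K)⁻¹) • (bE n K i - bE n K j)
      else if lam n i j + lam n k l < n then
        (if j = k then xe n K i l else 0) - (if l = i then xe n K k j else 0)
      else 0
  | Sum.inr (Sum.inl i), Sum.inl ⟨(j, k), _⟩ =>
      (((if i = j then 1 else 0) : K) - ((if i = k then 1 else 0) : K)) • xe n K j k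
  | Sum.inl ⟨(j, k), _⟩, Sum.inr (Sum.inl i) =>
      -((((if i = j then 1 else 0) : K) - ((if i = k then 1 else 0) : K)) • xe n K j k)
  | _, _ => 0

/-- The bilinear bracket of `Iuₙ`, extended bilinearly from its values on basis elements. -/
noncomputable def br : Iu n K →ₗ[K] Iu n K →ₗ[K] Iu n K :=
  Finsupp.lift (Iu n K →ₗ[K] Iu n K) K (IuIdx n) fun s =>
    Finsupp.lift (Iu n K) K (IuIdx n) fun t => bb n K s t

/-- The span of all brackets of elements of `S` with elements of `T`. -/
noncomputable def bracketSpan (S T : Submodule K (Iu n K)) : Submodule K (Iu n K) :=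
  Submodule.span K {w | ∃ u ∈ S, ∃ v ∈ T, w = br n K u v}

/-! The derived algebra is spanned by the brackets of pairs of basis vectors, and each of these is
zero or a multiple of some `x_{ij}` or some `b_i - b_j`. Conversely `x_{ij} = [a_i, x_{ij}]`, and
`b_i - b_j = 2 [x_{ij}, x_{ji}]` because `2` is invertible. -/

noncomputable def xbSpan : Submodule K (Iu n K) :=
  Submodule.span K
    ({v | ∃ (i j : Fin n) (h : i ≠ j), v = xE n K i j h} ∪
      {v | ∃ i j : Fin n, v = bE n K i - bE n K j})

namespace Iu

variable {n K}

theorem bracketSpan_eq_map₂ (S T : Submodule K (Iu n K)) :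
    bracketSpan n K S T = Submodule.map₂ (br n K) S T := by
  rw [Submodule.map₂_eq_span_image2, bracketSpan]
  congr 1
  ext w
  simp only [Set.mem_ofPred_eq, Set.mem_image2, SetLike.mem_coe, eq_comm]

theorem br_single_one (s t : IuIdx n) :
    br n K (Finsupp.single s 1) (Finsupp.single t 1) = bb n K s t := by
  simp [br]

theorem bracketSpan_top_top :
    bracketSpan n K ⊤ ⊤ = Submodule.span K (Set.range (Function.uncurry (bb n K))) := by
  rw [bracketSpan_eq_map₂, ← (Finsupp.basisSingleOne (R := K) (ι := IuIdx n)).span_eq,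
    Submodule.map₂_span_span, Set.image2_range]
  simp only [Finsupp.coe_basisSingleOne, br_single_one]
  rfl

theorem xe_mem_xbSpan (i j : Fin n) : xe n K i j ∈ xbSpan n K := by
  unfold xe
  split
  · exact Submodule.subset_span (Or.inl ⟨i, j, ‹_›, rfl⟩)
  · exact zero_mem _

theorem bE_sub_mem_xbSpan (i j : Fin n) : bE n K i - bE n K j ∈ xbSpan n K :=
  Submodule.subset_span (Or.inr ⟨i, j, rfl⟩)

theorem bb_mem_xbSpan (s t : IuIdx n) : bb n K s t ∈ xbSpan n K := by
  rcases s with ⟨⟨i, j⟩, hij⟩ | i | i <;> rcases t with ⟨⟨k, l⟩, hkl⟩ | k | k <;>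
    simp only [bb] <;> (try split_ifs) <;>
    solve_by_elim only [zero_mem, Submodule.smul_mem, neg_mem, sub_mem, xe_mem_xbSpan,
      bE_sub_mem_xbSpan]

theorem bb_aE_xE (i j : Fin n) (h : i ≠ j) :
    bb n K (.inr (.inl i)) (.inl ⟨(i, j), h⟩) = xE n K i j h := by
  simp [bb, xe, h]

theorem bb_xE_xE_swap (i j : Fin n) (h : i ≠ j) :
    bb n K (.inl ⟨(i, j), h⟩) (.inl ⟨(j, i), h.symm⟩) = (2 : K)⁻¹ • (bE n K i - bE n K j) := by
  simp [bb]

end Iu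

open Iu

theorem stmt12 (n : ℕ) (K : Type*) [Field K] (hK : (2 : K) ≠ 0) :
    bracketSpan n K ⊤ ⊤ =
      Submodule.span K
        ({v | ∃ (i j : Fin n) (h : i ≠ j), v = xE n K i j h} ∪
          {v | ∃ i j : Fin n, v = bE n K i - bE n K j}) := by
  change _ = xbSpan n K
  rw [bracketSpan_top_top]
  apply le_antisymm
  · rw [Submodule.span_le]
    rintro _ ⟨⟨s, t⟩, rfl⟩
    exact bb_mem_xbSpan s t
  · rw [xbSpan, Submodule.span_le]
    rintro _ (⟨i, j, h, rfl⟩ | ⟨i, j, rfl⟩)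
    · exact Submodule.subset_span ⟨(_, _), bb_aE_xE i j h⟩
    · obtain rfl | h := eq_or_ne i j
      · simp
      · rw [← smul_inv_smul₀ hK (bE n K i - bE n K j), ← bb_xE_xE_swap i j h]
        exact Submodule.smul_mem _ _ (Submodule.subset_span ⟨(_, _), rfl⟩)
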